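/- Let ψ : Γ → Γ' be a group homomorphism, and let ψ^* : C^n(Γ') → C^n(Γ) be the induced map (ψ^*φ)(g₀,…,g_n) = φ(ψ(g₀),…,ψ(g_n)). Then ψ^* induces a well-defined map H^n_b(Γ') → H^n_b(Γ) which carries EH^n_b(Γ') into EH^n_b(Γ), and this map is norm non-increasing for the seminorm ‖·‖_bah: for every α ∈ EH^n_b(Γ') one has ‖ψ^*α‖_bah ≤ ‖α‖_bah (an inequality in [0,∞]). -/

import Mathlib

set_option linter.unusedSectionVars false
set_option linter.unusedVariables false

open scoped ENNReal

namespace BddCoh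

variable (G : Type*) [Group G]

/-- Homogeneous real `n`-cochains on `G`: functions `G^{n+1} → ℝ`. -/
abbrev Cochain (n : ℕ) : Type _ := (Fin (n + 1) → G) → ℝ

variable {G}

/-- Invariance of a homogeneous cochain under the diagonal left translation action. -/
def IsInvariant {n : ℕ} (φ : Cochain G n) : Prop :=
  ∀ (g : G) (x : Fin (n + 1) → G), φ (fun i => g * x i) = φ x

/-- Boundedness of a cochain. -/
def IsBoundedC {n : ℕ} (φ : Cochain G n) : Prop :=
  ∃ C : ℝ, ∀ x, |φ x| ≤ C

/-- The sup-norm of a cochain, valued in `[0,∞]`. -/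
noncomputable def snorm {n : ℕ} (φ : Cochain G n) : ℝ≥0∞ :=
  ⨆ x : Fin (n + 1) → G, ENNReal.ofReal |φ x|

/-- The homogeneous differential. -/
noncomputable def delta {n : ℕ} : Cochain G n →ₗ[ℝ] Cochain G (n + 1) where
  toFun φ := fun x => ∑ i : Fin (n + 2), (-1 : ℝ) ^ (i : ℕ) * φ (fun j => x (i.succAbove j))
  map_add' φ ψ := by
    funext x
    simp [mul_add, Finset.sum_add_distrib]
  map_smul' c φ := by
    funext x
    simp only [Pi.smul_apply, smul_eq_mul, RingHom.id_apply]
    rw [Finset.mul_sum]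
    exact Finset.sum_congr rfl fun i _ => by ring

lemma IsInvariant.add {n : ℕ} {φ ψ : Cochain G n} (h1 : IsInvariant φ) (h2 : IsInvariant ψ) :
    IsInvariant (φ + ψ) := fun g x => by
  simp only [Pi.add_apply, h1 g x, h2 g x]

lemma IsInvariant.smul {n : ℕ} (c : ℝ) {φ : Cochain G n} (h : IsInvariant φ) :
    IsInvariant (c • φ) := fun g x => by
  simp only [Pi.smul_apply, h g x]

lemma IsInvariant.zero {n : ℕ} : IsInvariant (0 : Cochain G n) := fun _ _ => rfl

lemma IsBoundedC.add {n : ℕ} {φ ψ : Cochain G n} : IsBoundedC φ → IsBoundedC ψ →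
    IsBoundedC (φ + ψ)
  | ⟨C, hC⟩, ⟨D, hD⟩ => ⟨C + D, fun x => (abs_add_le (φ x) (ψ x)).trans (add_le_add (hC x) (hD x))⟩

lemma IsBoundedC.smul {n : ℕ} (c : ℝ) {φ : Cochain G n} : IsBoundedC φ → IsBoundedC (c • φ)
  | ⟨C, hC⟩ => ⟨|c| * C, fun x => by
      have h : |(c • φ) x| = |c| * |φ x| := by
        simp [abs_mul]
      rw [h]
      exact mul_le_mul_of_nonneg_left (hC x) (abs_nonneg c)⟩

lemma IsBoundedC.zero {n : ℕ} : IsBoundedC (0 : Cochain G n) := ⟨0, fun x => by simp⟩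

variable (G)

/-- The bounded invariant cocycles in degree `n`. -/
noncomputable def Zb (n : ℕ) : Submodule ℝ (Cochain G n) where
  carrier := {z | IsBoundedC z ∧ IsInvariant z ∧ delta z = 0}
  add_mem' := by
    rintro a b ⟨hba, hia, hda⟩ ⟨hbb, hib, hdb⟩
    exact ⟨hba.add hbb, hia.add hib, by rw [map_add, hda, hdb, add_zero]⟩
  zero_mem' := ⟨IsBoundedC.zero, IsInvariant.zero, map_zero _⟩
  smul_mem' := by
    rintro c a ⟨hb, hi, hd⟩
    exact ⟨hb.smul c, hi.smul c, by rw [map_smul, hd, smul_zero]⟩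

variable {G}

/-- Being the coboundary of a bounded invariant cochain (with the convention `C^{-1} = 0`). -/
def IsCobdry : ∀ {n : ℕ}, Cochain G n → Prop
  | 0, ψ => ψ = 0
  | n + 1, ψ => ∃ φ : Cochain G n, IsBoundedC φ ∧ IsInvariant φ ∧ delta φ = ψ

lemma IsCobdry.add : ∀ {n : ℕ} {a b : Cochain G n}, IsCobdry a → IsCobdry b → IsCobdry (a + b)
  | 0, a, b, ha, hb => by
      show a + b = 0
      rw [show a = 0 from ha, show b = 0 from hb, add_zero]
  | n + 1, a, b, ⟨φ, h1, h2, h3⟩, ⟨ψ, g1, g2, g3⟩ =>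
      ⟨φ + ψ, h1.add g1, h2.add g2, by rw [map_add, h3, g3]⟩

lemma IsCobdry.smul : ∀ {n : ℕ} (c : ℝ) {a : Cochain G n}, IsCobdry a → IsCobdry (c • a)
  | 0, c, a, ha => by
      show c • a = 0
      rw [show a = 0 from ha, smul_zero]
  | n + 1, c, a, ⟨φ, h1, h2, h3⟩ => ⟨c • φ, h1.smul c, h2.smul c, by rw [map_smul, h3]⟩

lemma IsCobdry.zero : ∀ {n : ℕ}, IsCobdry (0 : Cochain G n)
  | 0 => rfl
  | n + 1 => ⟨0, IsBoundedC.zero, IsInvariant.zero, map_zero _⟩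

variable (G)

/-- The coboundaries, as a submodule of the cocycles. -/
noncomputable def Bb (n : ℕ) : Submodule ℝ (Zb G n) where
  carrier := {z | IsCobdry (z : Cochain G n)}
  add_mem' := by
    intro a b ha hb
    show IsCobdry ((a + b : Zb G n) : Cochain G n)
    rw [Submodule.coe_add]
    exact ha.add hb
  zero_mem' := by
    show IsCobdry ((0 : Zb G n) : Cochain G n)
    rw [ZeroMemClass.coe_zero]
    exact IsCobdry.zero
  smul_mem' := by
    intro c a ha
    show IsCobdry ((c • a : Zb G n) : Cochain G n)
    rw [Submodule.coe_smul]
    exact ha.smul c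

/-- Bounded cohomology of `G` in degree `n` (with trivial real coefficients), computed from
the complex of bounded invariant homogeneous cochains. -/
abbrev Hb (n : ℕ) := Zb G n ⧸ Bb G n

variable {G}

/-- The bounded cohomology class of a bounded invariant cocycle. -/
noncomputable abbrev mkH {n : ℕ} (z : Zb G n) : Hb G n := (Bb G n).mkQ z

lemma mkH_zero {n : ℕ} : mkH (0 : Zb G n) = 0 := map_zero (Bb G n).mkQ

lemma mkH_add {n : ℕ} (y z : Zb G n) : mkH (y + z) = mkH y + mkH z := map_add (Bb G n).mkQ y z

lemma mkH_smul {n : ℕ} (c : ℝ) (z : Zb G n) : mkH (c • z) = c • mkH z :=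
  map_smul (Bb G n).mkQ c z

/-- The Gromov seminorm (canonical `ℓ^∞`-seminorm) on bounded cohomology, in `[0,∞]`. -/
noncomputable def gnorm {n : ℕ} (α : Hb G n) : ℝ≥0∞ :=
  sInf {r | ∃ z : Zb G n, mkH z = α ∧ snorm (z : Cochain G n) = r}

lemma snorm_zero {n : ℕ} : snorm (0 : Cochain G n) = 0 :=
  le_antisymm (iSup_le fun x => by simp) zero_le

lemma snorm_add_le {n : ℕ} (φ ψ : Cochain G n) : snorm (φ + ψ) ≤ snorm φ + snorm ψ := by
  refine iSup_le fun x => ?_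
  calc ENNReal.ofReal |(φ + ψ) x| ≤ ENNReal.ofReal (|φ x| + |ψ x|) :=
        ENNReal.ofReal_le_ofReal (abs_add_le (φ x) (ψ x))
    _ = ENNReal.ofReal |φ x| + ENNReal.ofReal |ψ x| :=
        ENNReal.ofReal_add (abs_nonneg _) (abs_nonneg _)
    _ ≤ snorm φ + snorm ψ :=
        add_le_add (le_iSup (fun x => ENNReal.ofReal |φ x|) x)
          (le_iSup (fun x => ENNReal.ofReal |ψ x|) x)

lemma snorm_smul_le {n : ℕ} (c : ℝ) (φ : Cochain G n) :
    snorm (c • φ) ≤ ENNReal.ofReal |c| * snorm φ := by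
  refine iSup_le fun x => ?_
  have h : |(c • φ) x| = |c| * |φ x| := by simp [abs_mul]
  rw [h, ENNReal.ofReal_mul (abs_nonneg c)]
  exact mul_le_mul_right (le_iSup (fun x => ENNReal.ofReal |φ x|) x) _

lemma gnorm_le_snorm {n : ℕ} (z : Zb G n) : gnorm (mkH z) ≤ snorm (z : Cochain G n) :=
  sInf_le ⟨z, rfl, rfl⟩

lemma gnorm_zero {n : ℕ} : gnorm (0 : Hb G n) = 0 := by
  refine le_antisymm ?_ zero_le
  have h := gnorm_le_snorm (0 : Zb G n)
  rw [mkH_zero] at h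
  simpa [snorm_zero] using h

lemma exists_gnorm_rep {n : ℕ} {α : Hb G n} (h : gnorm α = 0) {ε : ℝ≥0∞} (hε : 0 < ε) :
    ∃ z : Zb G n, mkH z = α ∧ snorm (z : Cochain G n) < ε := by
  have h2 : gnorm α < ε := by rw [h]; exact hε
  rw [gnorm] at h2
  obtain ⟨r, ⟨z, hz, hr⟩, hlt⟩ := sInf_lt_iff.mp h2
  exact ⟨z, hz, hr ▸ hlt⟩

variable (G)

/-- The subspace of classes with vanishing Gromov seminorm. -/
noncomputable def NG (n : ℕ) : Submodule ℝ (Hb G n) where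
  carrier := {α | gnorm α = 0}
  zero_mem' := gnorm_zero
  add_mem' := by
    intro a b ha hb
    show gnorm (a + b) = 0
    refine le_antisymm ?_ zero_le
    refine ENNReal.le_of_forall_pos_le_add fun ε hε _ => ?_
    have hε2 : (0 : ℝ≥0∞) < (ε : ℝ≥0∞) / 2 :=
      ENNReal.half_pos (by exact_mod_cast hε.ne')
    obtain ⟨z₁, h₁, s₁⟩ := exists_gnorm_rep ha hε2
    obtain ⟨z₂, h₂, s₂⟩ := exists_gnorm_rep hb hε2
    have hmk : mkH (z₁ + z₂) = a + b := by rw [mkH_add, h₁, h₂]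
    calc gnorm (a + b) ≤ snorm ((z₁ + z₂ : Zb G n) : Cochain G n) := hmk ▸ gnorm_le_snorm _
      _ = snorm ((z₁ : Cochain G n) + (z₂ : Cochain G n)) := by rw [Submodule.coe_add]
      _ ≤ snorm (z₁ : Cochain G n) + snorm (z₂ : Cochain G n) := snorm_add_le _ _
      _ ≤ (ε : ℝ≥0∞) / 2 + (ε : ℝ≥0∞) / 2 := add_le_add s₁.le s₂.le
      _ = (ε : ℝ≥0∞) := ENNReal.add_halves _
      _ ≤ 0 + ε := by rw [zero_add]
  smul_mem' := by
    intro c a ha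
    show gnorm (c • a) = 0
    by_cases hc : c = 0
    · subst hc
      rw [zero_smul]
      exact gnorm_zero
    refine le_antisymm ?_ zero_le
    refine ENNReal.le_of_forall_pos_le_add fun ε hε _ => ?_
    have hM0 : ENNReal.ofReal |c| ≠ 0 := by
      rw [Ne, ENNReal.ofReal_eq_zero, not_le]
      exact abs_pos.mpr hc
    have hMt : ENNReal.ofReal |c| ≠ ⊤ := ENNReal.ofReal_ne_top
    have hδ : (0 : ℝ≥0∞) < (ε : ℝ≥0∞) / ENNReal.ofReal |c| :=
      ENNReal.div_pos (by exact_mod_cast hε.ne') hMt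
    obtain ⟨z, hz, hs⟩ := exists_gnorm_rep ha hδ
    have hmk : mkH (c • z) = c • a := by rw [mkH_smul, hz]
    calc gnorm (c • a) ≤ snorm ((c • z : Zb G n) : Cochain G n) := hmk ▸ gnorm_le_snorm _
      _ = snorm (c • (z : Cochain G n)) := by rw [Submodule.coe_smul]
      _ ≤ ENNReal.ofReal |c| * snorm (z : Cochain G n) := snorm_smul_le c _
      _ ≤ ENNReal.ofReal |c| * ((ε : ℝ≥0∞) / ENNReal.ofReal |c|) := mul_le_mul_right hs.le _
      _ = (ε : ℝ≥0∞) := ENNReal.mul_div_cancel hM0 hMt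
      _ ≤ 0 + ε := by rw [zero_add]

variable {G}

/-- Having an invariant (possibly unbounded) primitive (with the convention `C^{-1} = 0`). -/
def HasInvPrimitive : ∀ {n : ℕ}, Cochain G n → Prop
  | 0, ψ => ψ = 0
  | n + 1, ψ => ∃ φ : Cochain G n, IsInvariant φ ∧ delta φ = ψ

/-- A bounded cohomology class is exact if it lies in the kernel of the comparison map, i.e. if
it is represented by the coboundary of an invariant (possibly unbounded) cochain. -/
def IsExact {n : ℕ} (α : Hb G n) : Prop :=
  ∃ z : Zb G n, mkH z = α ∧ HasInvPrimitive (z : Cochain G n)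

/-- Values `‖δφ‖_∞` over invariant primitives `φ` of representatives of `α` vanishing on
`S^{n}` (with the convention `C^{-1} = 0` in degree `0`). -/
def bahSet : ∀ {n : ℕ}, Set G → Hb G n → Set ℝ≥0∞
  | 0, _, α => {r | α = 0 ∧ r = 0}
  | n + 1, S, α =>
      {r | ∃ φ : Cochain G n, IsInvariant φ ∧
        (∀ x : Fin (n + 1) → G, (∀ i, x i ∈ S) → φ x = 0) ∧
        (∃ z : Zb G (n + 1), (z : Cochain G (n + 1)) = delta φ ∧ mkH z = α) ∧
        snorm (delta φ) = r}

/-- The seminorm `‖α‖_S`. -/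
noncomputable def normS {n : ℕ} (S : Set G) (α : Hb G n) : ℝ≥0∞ :=
  sInf (bahSet S α)

/-- The seminorm `‖α‖_bah = sup_S ‖α‖_S`, the supremum running over all finite `S ⊆ G`. -/
noncomputable def bah {n : ℕ} (α : Hb G n) : ℝ≥0∞ :=
  ⨆ S : Finset G, normS (S : Set G) α

lemma normS_le {n : ℕ} {S : Set G} {α : Hb G (n + 1)} {φ : Cochain G n}
    (h1 : IsInvariant φ) (h2 : ∀ x : Fin (n + 1) → G, (∀ i, x i ∈ S) → φ x = 0)
    (h3 : ∃ z : Zb G (n + 1), (z : Cochain G (n + 1)) = delta φ ∧ mkH z = α) :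
    normS S α ≤ snorm (delta φ) :=
  sInf_le ⟨φ, h1, h2, h3, rfl⟩

lemma normS_le_bah {n : ℕ} (S : Finset G) (α : Hb G n) : normS (S : Set G) α ≤ bah α :=
  le_iSup (fun S : Finset G => normS (S : Set G) α) S

lemma bah_zero : ∀ {n : ℕ}, bah (0 : Hb G n) = 0 := by
  intro n
  refine le_antisymm (iSup_le fun S => ?_) zero_le
  cases n with
  | zero =>
      refine le_trans (sInf_le ?_) le_rfl
      exact ⟨rfl, rfl⟩
  | succ n =>
      have h := normS_le (α := (0 : Hb G (n + 1))) (S := (S : Set G))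
        (φ := (0 : Cochain G n)) IsInvariant.zero (fun x _ => rfl)
        ⟨0, by rw [ZeroMemClass.coe_zero, map_zero], map_zero _⟩
      rw [map_zero, snorm_zero] at h
      exact h

lemma eq_zero_of_bah_zero₀ {α : Hb G 0} (h : bah α = 0) : α = 0 := by
  by_contra hα
  have hS : normS ((∅ : Finset G) : Set G) α = ⊤ := by
    rw [normS]
    rw [show bahSet ((∅ : Finset G) : Set G) α = ∅ from ?_, sInf_empty]
    ext r
    simp only [bahSet, Set.mem_setOf_eq, Set.mem_empty_iff_false, iff_false, not_and]
    intro h0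
    exact absurd h0 hα
  have := normS_le_bah (∅ : Finset G) α
  rw [hS, h] at this
  exact absurd (top_le_iff.mp this).symm (by simp)

lemma normS_eq_zero_of_bah {n : ℕ} {α : Hb G n} (h : bah α = 0) (S : Finset G) :
    normS (S : Set G) α = 0 :=
  le_antisymm (h ▸ normS_le_bah S α) zero_le

lemma exists_bah_rep {n : ℕ} {α : Hb G (n + 1)} (h : bah α = 0) (S : Finset G)
    {ε : ℝ≥0∞} (hε : 0 < ε) :
    ∃ φ : Cochain G n, IsInvariant φ ∧
      (∀ x : Fin (n + 1) → G, (∀ i, x i ∈ (S : Set G)) → φ x = 0) ∧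
      (∃ z : Zb G (n + 1), (z : Cochain G (n + 1)) = delta φ ∧ mkH z = α) ∧
      snorm (delta φ) < ε := by
  have h2 : normS ((S : Set G)) α < ε := by
    rw [normS_eq_zero_of_bah h S]; exact hε
  rw [normS] at h2
  obtain ⟨r, hr, hlt⟩ := sInf_lt_iff.mp h2
  obtain ⟨φ, h1, h2', h3, h4⟩ := hr
  exact ⟨φ, h1, h2', h3, h4 ▸ hlt⟩

variable (G)

/-- The subspace `N^n_0` of exact classes with vanishing `‖·‖_bah`-seminorm. -/
noncomputable def N0 (n : ℕ) : Submodule ℝ (Hb G n) where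
  carrier := {α | bah α = 0}
  zero_mem' := bah_zero
  add_mem' := by
    intro a b ha hb
    show bah (a + b) = 0
    cases n with
    | zero =>
        rw [eq_zero_of_bah_zero₀ ha, eq_zero_of_bah_zero₀ hb, add_zero]
        exact bah_zero
    | succ n =>
        refine le_antisymm (iSup_le fun S => ?_) zero_le
        refine ENNReal.le_of_forall_pos_le_add fun ε hε _ => ?_
        have hε2 : (0 : ℝ≥0∞) < (ε : ℝ≥0∞) / 2 :=
          ENNReal.half_pos (by exact_mod_cast hε.ne')
        obtain ⟨φ₁, i₁, v₁, ⟨z₁, hz₁, hm₁⟩, s₁⟩ := exists_bah_rep ha S hε2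
        obtain ⟨φ₂, i₂, v₂, ⟨z₂, hz₂, hm₂⟩, s₂⟩ := exists_bah_rep hb S hε2
        have hsum : normS (S : Set G) (a + b) ≤ snorm (delta (φ₁ + φ₂)) := by
          refine normS_le (i₁.add i₂) (fun x hx => ?_) ⟨z₁ + z₂, ?_, ?_⟩
          · simp only [Pi.add_apply, v₁ x hx, v₂ x hx, add_zero]
          · rw [Submodule.coe_add, hz₁, hz₂, map_add]
          · rw [mkH_add, hm₁, hm₂]
        refine hsum.trans ?_
        calc snorm (delta (φ₁ + φ₂)) = snorm (delta φ₁ + delta φ₂) := by rw [map_add]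
          _ ≤ snorm (delta φ₁) + snorm (delta φ₂) := snorm_add_le _ _
          _ ≤ (ε : ℝ≥0∞) / 2 + (ε : ℝ≥0∞) / 2 := add_le_add s₁.le s₂.le
          _ = (ε : ℝ≥0∞) := ENNReal.add_halves _
          _ ≤ 0 + ε := by rw [zero_add]
  smul_mem' := by
    intro c a ha
    show bah (c • a) = 0
    by_cases hc : c = 0
    · subst hc
      rw [zero_smul]
      exact bah_zero
    cases n with
    | zero =>
        rw [eq_zero_of_bah_zero₀ ha, smul_zero]
        exact bah_zero
    | succ n =>
        refine le_antisymm (iSup_le fun S => ?_) zero_le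
        refine ENNReal.le_of_forall_pos_le_add fun ε hε _ => ?_
        have hM0 : ENNReal.ofReal |c| ≠ 0 := by
          rw [Ne, ENNReal.ofReal_eq_zero, not_le]
          exact abs_pos.mpr hc
        have hMt : ENNReal.ofReal |c| ≠ ⊤ := ENNReal.ofReal_ne_top
        have hδ : (0 : ℝ≥0∞) < (ε : ℝ≥0∞) / ENNReal.ofReal |c| :=
          ENNReal.div_pos (by exact_mod_cast hε.ne') hMt
        obtain ⟨φ, hi, hv, ⟨z, hz, hm⟩, hs⟩ := exists_bah_rep ha S hδ
        have hle : normS (S : Set G) (c • a) ≤ snorm (delta (c • φ)) := by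
          refine normS_le (hi.smul c) (fun x hx => ?_) ⟨c • z, ?_, ?_⟩
          · simp only [Pi.smul_apply, hv x hx, smul_zero]
          · rw [Submodule.coe_smul, hz, map_smul]
          · rw [mkH_smul, hm]
        refine hle.trans ?_
        calc snorm (delta (c • φ)) = snorm (c • delta φ) := by rw [map_smul]
          _ ≤ ENNReal.ofReal |c| * snorm (delta φ) := snorm_smul_le c _
          _ ≤ ENNReal.ofReal |c| * ((ε : ℝ≥0∞) / ENNReal.ofReal |c|) :=
              mul_le_mul_right hs.le _
          _ = (ε : ℝ≥0∞) := ENNReal.mul_div_cancel hM0 hMt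
          _ ≤ 0 + ε := by rw [zero_add]

variable {G}
variable {G' : Type*} [Group G']

/-- Pullback of cochains along a group homomorphism. -/
def pull (ψ : G →* G') {n : ℕ} (φ : Cochain G' n) : Cochain G n :=
  fun x => φ fun i => ψ (x i)

lemma delta_pull (ψ : G →* G') {n : ℕ} (φ : Cochain G' n) :
    delta (pull ψ φ) = pull ψ (delta φ) := rfl

lemma IsBoundedC.pull {ψ : G →* G'} {n : ℕ} {φ : Cochain G' n} :
    IsBoundedC φ → IsBoundedC (BddCoh.pull ψ φ)
  | ⟨C, hC⟩ => ⟨C, fun x => hC _⟩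

lemma IsInvariant.pull {ψ : G →* G'} {n : ℕ} {φ : Cochain G' n} (h : IsInvariant φ) :
    IsInvariant (BddCoh.pull ψ φ) := by
  intro g x
  show φ (fun i => ψ (g * x i)) = φ (fun i => ψ (x i))
  have he : (fun i => ψ (g * x i)) = fun i => ψ g * ψ (x i) :=
    funext fun i => map_mul ψ _ _
  rw [he]
  exact h (ψ g) _

/-- Pullback on bounded invariant cocycles. -/
noncomputable def pullZ (ψ : G →* G') (n : ℕ) : Zb G' n →ₗ[ℝ] Zb G n where
  toFun z := ⟨pull ψ (z : Cochain G' n), by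
    obtain ⟨hb, hi, hd⟩ := z.2
    refine ⟨hb.pull, hi.pull, ?_⟩
    rw [delta_pull, hd]
    rfl⟩
  map_add' z w := Subtype.ext rfl
  map_smul' c z := Subtype.ext rfl

lemma pullZ_mem_Bb (ψ : G →* G') :
    ∀ {n : ℕ} (z : Zb G' n), z ∈ Bb G' n → pullZ ψ n z ∈ Bb G n
  | 0, z, hz => by
      show pull ψ (z : Cochain G' 0) = 0
      rw [show (z : Cochain G' 0) = 0 from hz]
      rfl
  | n + 1, z, ⟨φ, h1, h2, h3⟩ =>
      ⟨pull ψ φ, h1.pull, h2.pull, by rw [delta_pull, h3]; rfl⟩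

/-- The map induced on bounded cohomology by a group homomorphism. -/
noncomputable def Hbpull (ψ : G →* G') (n : ℕ) : Hb G' n →ₗ[ℝ] Hb G n :=
  Submodule.mapQ (Bb G' n) (Bb G n) (pullZ ψ n) fun z hz => pullZ_mem_Bb ψ z hz


end BddCoh

namespace BddCoh

variable {G G' : Type*} [Group G] [Group G']

lemma coe_pullZ (ψ : G →* G') {n : ℕ} (z : Zb G' n) :
    (pullZ ψ n z : Cochain G n) = pull ψ (z : Cochain G' n) := rfl

lemma Hbpull_mkH (ψ : G →* G') {n : ℕ} (z : Zb G' n) :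
    Hbpull ψ n (mkH z) = mkH (pullZ ψ n z) := rfl

lemma snorm_pull_le (ψ : G →* G') {n : ℕ} (φ : Cochain G' n) : snorm (pull ψ φ) ≤ snorm φ :=
  iSup_le fun x => le_iSup (fun y => ENNReal.ofReal |φ y|) fun i => ψ (x i)

lemma HasInvPrimitive.pull {ψ : G →* G'} :
    ∀ {n : ℕ} {φ : Cochain G' n}, HasInvPrimitive φ → HasInvPrimitive (BddCoh.pull ψ φ)
  | 0, _, hφ => by rw [show _ = (0 : Cochain G' 0) from hφ]; rfl
  | _ + 1, _, ⟨θ, hθ, hδθ⟩ => ⟨BddCoh.pull ψ θ, hθ.pull, by rw [delta_pull, hδθ]⟩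

lemma IsExact.Hbpull (ψ : G →* G') {n : ℕ} {α : Hb G' n} (hα : IsExact α) :
    IsExact (Hbpull ψ n α) := by
  obtain ⟨z, rfl, hz⟩ := hα
  exact ⟨pullZ ψ n z, Hbpull_mkH ψ z, hz.pull⟩

/-- A primitive vanishing on `(ψ '' S)^n` pulls back to one vanishing on `S^n`, and pulling
back does not increase the sup-norm. -/
lemma normS_Hbpull_le (ψ : G →* G') :
    ∀ {n : ℕ} (S : Set G) (α : Hb G' n), normS S (Hbpull ψ n α) ≤ normS (ψ '' S) α
  | 0, _, _ => le_sInf fun _ ⟨hα, hr⟩ => sInf_le ⟨by rw [hα, map_zero], hr⟩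
  | n + 1, S, α => le_sInf fun r ⟨φ, hφ, hφS, ⟨z, hz, hzα⟩, hr⟩ => by
      have hpull : normS S (Hbpull ψ (n + 1) α) ≤ snorm (delta (pull ψ φ)) :=
        normS_le hφ.pull (fun x hx => hφS _ fun i => Set.mem_image_of_mem ψ (hx i))
          ⟨pullZ ψ (n + 1) z, by rw [coe_pullZ, hz, delta_pull], by rw [← hzα, Hbpull_mkH]⟩
      rw [← hr]
      exact hpull.trans (delta_pull ψ φ ▸ snorm_pull_le ψ (delta φ))

lemma bah_Hbpull_le (ψ : G →* G') {n : ℕ} (α : Hb G' n) : bah (Hbpull ψ n α) ≤ bah α :=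
  iSup_le fun S => (normS_Hbpull_le ψ S α).trans <| by
    classical
    rw [← Finset.coe_image]
    exact normS_le_bah _ α

end BddCoh

open BddCoh

/-- A group homomorphism `ψ : Γ → Γ'` induces a map on bounded cohomology which carries exact
classes to exact classes and is norm non-increasing for the seminorm `‖·‖_bah`. -/
theorem Hbpull_exact_and_bah_nonincreasing (Γ Γ' : Type*) [Group Γ] [Group Γ']
    (ψ : Γ →* Γ') (n : ℕ) (α : Hb Γ' n) (hα : IsExact α) :
    IsExact (Hbpull ψ n α) ∧ bah (Hbpull ψ n α) ≤ bah α :=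
  ⟨hα.Hbpull ψ, bah_Hbpull_le ψ α⟩
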